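/- Let E ∪_m F be an adjunction topological graph. Then E is a closed subgraph of E ∪_m F, and the canonical maps p⁰ : F⁰ → (E ∪_m F)⁰ and p¹ : F¹ → (E ∪_m F)¹ are proper and satisfy condition (F1): r_∪(p¹(e)) = p⁰(r_F(e)) and s_∪(p¹(e)) = p⁰(s_F(e)) for all e ∈ F¹. -/

import Mathlib

open Set Topology

/-- A continuous map which is proper: preimages of compact sets are compact. -/
def ProperCont {X Y : Type*} [TopologicalSpace X] [TopologicalSpace Y] (f : X → Y) : Prop :=
  Continuous f ∧ ∀ K : Set Y, IsCompact K → IsCompact (f ⁻¹' K)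

/-- The raw data of a (topological) graph: a source and a range map from edges to vertices. -/
structure GraphData (V E : Type*) where
  s : E → V
  r : E → V

/-- `g` is a topological graph: source and range are continuous and the range map is a
local homeomorphism. -/
structure IsTopGraph {V E : Type*} [TopologicalSpace V] [TopologicalSpace E]
    (g : GraphData V E) : Prop where
  s_cont : Continuous g.s
  r_cont : Continuous g.r
  r_locHomeo : IsLocalHomeomorph g.r

namespace GraphData

variable {V E : Type*} [TopologicalSpace V] [TopologicalSpace E]

/-- `E⁰_fin`: vertices having a neighborhood whose preimage under the source map is compact. -/
def finSet (g : GraphData V E) : Set V := {v | ∃ U ∈ nhds v, IsCompact (g.s ⁻¹' U)}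

/-- `E⁰_sink = E⁰ \ closure (s(E¹))`. -/
def sinkSet (g : GraphData V E) : Set V := (closure (Set.range g.s))ᶜ

/-- `E⁰_reg = E⁰_fin \ closure (E⁰_sink)`. -/
def regSet (g : GraphData V E) : Set V := g.finSet \ closure g.sinkSet

/-- `E⁰_sing = E⁰ \ E⁰_reg`. -/
def singSet (g : GraphData V E) : Set V := (g.regSet)ᶜ

/-- A set of vertices is negatively invariant if every regular vertex in it emits an
edge whose range lies in it. -/
def NegInvariant (g : GraphData V E) (Y : Set V) : Prop :=
  ∀ v ∈ Y ∩ g.regSet, ∃ e, g.s e = v ∧ g.r e ∈ Y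

/-- A topological graph is row-finite if `s(E¹) = E⁰_reg`. -/
def RowFinite (g : GraphData V E) : Prop := Set.range g.s = g.regSet

/-- The restriction of a graph to a pair of subsets of vertices and edges. -/
def restrict (g : GraphData V E) (G0 : Set V) (G1 : Set E)
    (hs : Set.MapsTo g.s G1 G0) (hr : Set.MapsTo g.r G1 G0) : GraphData G0 G1 where
  s := fun e => ⟨g.s e, hs e.2⟩
  r := fun e => ⟨g.r e, hr e.2⟩

end GraphData

/-- `(G0, G1)` determines a closed subgraph of `g` (in particular it is itself
a topological graph with the restricted source and range maps). -/
structure IsClosedSubgraph {V E : Type*} [TopologicalSpace V] [TopologicalSpace E]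
    (g : GraphData V E) (G0 : Set V) (G1 : Set E) : Prop where
  s_maps : Set.MapsTo g.s G1 G0
  r_maps : Set.MapsTo g.r G1 G0
  closed0 : IsClosed G0
  closed1 : IsClosed G1
  isGraph : IsTopGraph (g.restrict G0 G1 s_maps r_maps)

/-- A regular closed subgraph: a closed subgraph whose vertex set is negatively invariant
and such that `r⁻¹(G⁰) ⊆ G¹`. -/
structure IsRegularClosedSubgraph {V E : Type*} [TopologicalSpace V] [TopologicalSpace E]
    (g : GraphData V E) (G0 : Set V) (G1 : Set E) extends IsClosedSubgraph g G0 G1 : Prop where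
  negInv : g.NegInvariant G0
  r_pre : g.r ⁻¹' G0 ⊆ G1

/-- A regular factor map `(m¹, m⁰) : gG → gF` between topological graphs: a pair of proper
continuous maps satisfying (F1), (F2) and (F3). -/
structure IsRegularFactorMap {V1 E1 V2 E2 : Type*}
    [TopologicalSpace V1] [TopologicalSpace E1] [TopologicalSpace V2] [TopologicalSpace E2]
    (gG : GraphData V1 E1) (gF : GraphData V2 E2) (m0 : V1 → V2) (m1 : E1 → E2) : Prop where
  proper0 : ProperCont m0
  proper1 : ProperCont m1
  F1r : ∀ e, gF.r (m1 e) = m0 (gG.r e)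
  F1s : ∀ e, gF.s (m1 e) = m0 (gG.s e)
  F2 : ∀ (x : E2) (v : V1), gF.r x = m0 v → ∃! e : E1, m1 e = x ∧ gG.r e = v
  F3 : m0 '' gG.singSet ⊆ gF.singSet

section Adjunction

/-- The relation generating the adjunction-space identification: `a ∈ A ⊆ Y` is glued
to `f a ∈ X`. -/
inductive AdjRel {X Y : Type*} {A : Set Y} (f : A → X) : X ⊕ Y → X ⊕ Y → Prop
  | glue (a : A) : AdjRel f (Sum.inl (f a)) (Sum.inr a.1)

/-- The adjunction space `X ∪_f Y`. -/
def AdjSpace {X Y : Type*} {A : Set Y} (f : A → X) : Type _ := Quot (AdjRel f)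

instance {X Y : Type*} [TopologicalSpace X] [TopologicalSpace Y] {A : Set Y} (f : A → X) :
    TopologicalSpace (AdjSpace f) :=
  inferInstanceAs (TopologicalSpace (Quot (AdjRel f)))

/-- The canonical (closed) embedding `X → X ∪_f Y`. -/
def adjInc {X Y : Type*} {A : Set Y} (f : A → X) : X → AdjSpace f :=
  fun x => Quot.mk _ (Sum.inl x)

/-- The canonical map `p : Y → X ∪_f Y`. -/
def adjP {X Y : Type*} {A : Set Y} (f : A → X) : Y → AdjSpace f :=
  fun y => Quot.mk _ (Sum.inr y)

variable {VE EE VF EF : Type*}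

/-- The source map `s_∪` of the adjunction graph `E ∪_m F`. -/
def adjS (gE : GraphData VE EE) (gF : GraphData VF EF) {G0 : Set VF} {G1 : Set EF}
    (m0 : G0 → VE) (m1 : G1 → EE) (hs : Set.MapsTo gF.s G1 G0)
    (hF1s : ∀ e : G1, gE.s (m1 e) = m0 ⟨gF.s e, hs e.2⟩) :
    AdjSpace m1 → AdjSpace m0 :=
  Quot.lift
    (fun x => match x with
      | Sum.inl e => adjInc m0 (gE.s e)
      | Sum.inr e => adjP m0 (gF.s e))
    (by
      rintro _ _ ⟨a⟩
      show adjInc m0 (gE.s (m1 a)) = adjP m0 (gF.s a.1)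
      rw [hF1s a]
      exact Quot.sound (AdjRel.glue ⟨gF.s a.1, hs a.2⟩))

/-- The range map `r_∪` of the adjunction graph `E ∪_m F`. -/
def adjR (gE : GraphData VE EE) (gF : GraphData VF EF) {G0 : Set VF} {G1 : Set EF}
    (m0 : G0 → VE) (m1 : G1 → EE) (hr : Set.MapsTo gF.r G1 G0)
    (hF1r : ∀ e : G1, gE.r (m1 e) = m0 ⟨gF.r e, hr e.2⟩) :
    AdjSpace m1 → AdjSpace m0 :=
  Quot.lift
    (fun x => match x with
      | Sum.inl e => adjInc m0 (gE.r e)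
      | Sum.inr e => adjP m0 (gF.r e))
    (by
      rintro _ _ ⟨a⟩
      show adjInc m0 (gE.r (m1 a)) = adjP m0 (gF.r a.1)
      rw [hF1r a]
      exact Quot.sound (AdjRel.glue ⟨gF.r a.1, hr a.2⟩))

/-- The adjunction graph `E ∪_m F`, obtained by attaching the topological graph `F` to the
topological graph `E` along a closed subgraph `(G0, G1)` of `F` via the pair `(m¹, m⁰)`. -/
def adjGraph (gE : GraphData VE EE) (gF : GraphData VF EF) {G0 : Set VF} {G1 : Set EF}
    (m0 : G0 → VE) (m1 : G1 → EE)
    (hs : Set.MapsTo gF.s G1 G0) (hr : Set.MapsTo gF.r G1 G0)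
    (hF1s : ∀ e : G1, gE.s (m1 e) = m0 ⟨gF.s e, hs e.2⟩)
    (hF1r : ∀ e : G1, gE.r (m1 e) = m0 ⟨gF.r e, hr e.2⟩) :
    GraphData (AdjSpace m0) (AdjSpace m1) where
  s := adjS gE gF m0 m1 hs hF1s
  r := adjR gE gF m0 m1 hr hF1r

end Adjunction

/-!
When `A ⊆ Y` is closed and `f : A → X` is proper, the quotient map `X ⊕ Y → X ∪_f Y` is proper:
the saturation of `C ⊆ X ⊕ Y` meets `X` in `D = (C ∩ X) ∪ f(C ∩ A)` and `Y` in `(C ∩ Y) ∪ f⁻¹(D)`,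
and both pieces are closed (compact) when `C` is. Composed with the closed embeddings of the two
summands it makes `X → X ∪_f Y` a proper injection, i.e. a closed embedding, and `p` proper.
At the level of graphs, the closed embeddings `E⁰, E¹ → E ∪_m F` intertwine the source and range
maps, so they carry `E` homeomorphically onto the subgraph they cut out.
-/

theorem IsProperMap.properCont {X Y : Type*} [TopologicalSpace X] [TopologicalSpace Y]
    {f : X → Y} (hf : IsProperMap f) : ProperCont f :=
  ⟨hf.continuous, fun _ => hf.isCompact_preimage⟩

theorem ProperCont.isProperMap {X Y : Type*} [TopologicalSpace X] [TopologicalSpace Y]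
    [T2Space Y] [CompactlyCoherentSpace Y] {f : X → Y} (hf : ProperCont f) : IsProperMap f :=
  isProperMap_iff_isCompact_preimage.2 ⟨hf.1, fun K => hf.2 K⟩

namespace AdjSpace

variable {X Y : Type*} {A : Set Y} (f : A → X)

open Classical in
noncomputable def normalize : X ⊕ Y → X ⊕ Y
  | Sum.inl x => Sum.inl x
  | Sum.inr y => if h : y ∈ A then Sum.inl (f ⟨y, h⟩) else Sum.inr y

theorem normalize_eq_of_adjRel {a b : X ⊕ Y} (h : AdjRel f a b) :
    normalize f a = normalize f b := by
  cases h with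
  | glue a => simp [normalize, a.2]

theorem mk_normalize (c : X ⊕ Y) : Quot.mk (AdjRel f) (normalize f c) = Quot.mk _ c := by
  rcases c with x | y
  · rfl
  · by_cases h : y ∈ A
    · simpa [normalize, h] using Quot.sound (AdjRel.glue (f := f) ⟨y, h⟩)
    · simp [normalize, h]

theorem mk_eq_mk_iff {c c' : X ⊕ Y} :
    Quot.mk (AdjRel f) c = Quot.mk (AdjRel f) c' ↔ normalize f c = normalize f c' :=
  ⟨fun h => congrArg (Quot.lift (normalize f) fun _ _ => normalize_eq_of_adjRel f) h,
    fun h => by rw [← mk_normalize f c, ← mk_normalize f c', h]⟩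

theorem mk_inl_eq_mk_iff {x : X} {c : X ⊕ Y} :
    Quot.mk (AdjRel f) (Sum.inl x) = Quot.mk _ c ↔
      c = Sum.inl x ∨ ∃ a : A, c = Sum.inr a.1 ∧ f a = x := by
  rw [mk_eq_mk_iff]
  rcases c with x' | y
  · simp [normalize, eq_comm]
  · by_cases h : y ∈ A <;> simp [normalize, h, eq_comm]

theorem mk_inr_eq_mk_iff_of_notMem {y : Y} (hy : y ∉ A) {c : X ⊕ Y} :
    Quot.mk (AdjRel f) (Sum.inr y) = Quot.mk _ c ↔ c = Sum.inr y := by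
  rw [mk_eq_mk_iff]
  rcases c with x' | y'
  · simp [normalize, hy]
  · by_cases h : y' ∈ A
    · simpa [normalize, h, hy] using ne_of_mem_of_not_mem h hy
    · simp [normalize, h, hy, eq_comm]

def inlSaturation (C : Set (X ⊕ Y)) : Set X :=
  Sum.inl ⁻¹' C ∪ f '' (Subtype.val ⁻¹' (Sum.inr ⁻¹' C))

theorem preimage_inl_saturation (C : Set (X ⊕ Y)) :
    Sum.inl ⁻¹' (Quot.mk (AdjRel f) ⁻¹' (Quot.mk _ '' C)) = inlSaturation f C := by
  ext x
  simp only [mem_preimage, mem_image, eq_comm (b := Quot.mk _ (Sum.inl x)), mk_inl_eq_mk_iff,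
    inlSaturation, mem_union]
  simp

theorem preimage_inr_saturation (C : Set (X ⊕ Y)) :
    Sum.inr ⁻¹' (Quot.mk (AdjRel f) ⁻¹' (Quot.mk _ '' C)) =
      Sum.inr ⁻¹' C ∪ Subtype.val '' (f ⁻¹' inlSaturation f C) := by
  ext y
  simp only [mem_preimage, mem_union, mem_image]
  by_cases hy : y ∈ A
  · have hglue : Quot.mk (AdjRel f) (Sum.inr y) = Quot.mk _ (Sum.inl (f ⟨y, hy⟩)) :=
      (Quot.sound (AdjRel.glue ⟨y, hy⟩)).symm
    rw [← mem_image, hglue, ← mem_preimage, ← mem_preimage (f := Sum.inl),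
      preimage_inl_saturation]
    refine ⟨fun h => Or.inr ⟨⟨y, hy⟩, h, rfl⟩, ?_⟩
    rintro (h | ⟨a, ha, rfl⟩)
    · exact Or.inr ⟨⟨y, hy⟩, h, rfl⟩
    · exact ha
  · simp only [mk_inr_eq_mk_iff_of_notMem f hy, eq_comm (b := Quot.mk _ (Sum.inr y))]
    simp [hy]

variable [TopologicalSpace X] [TopologicalSpace Y]

theorem isClosed_inlSaturation (hf : IsClosedMap f) {C : Set (X ⊕ Y)} (hC : IsClosed C) :
    IsClosed (inlSaturation f C) :=
  (hC.preimage continuous_inl).union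
    (hf _ ((hC.preimage continuous_inr).preimage continuous_subtype_val))

theorem isCompact_inlSaturation (hA : IsClosed A) (hf : Continuous f) {C : Set (X ⊕ Y)}
    (hC : IsCompact C) : IsCompact (inlSaturation f C) :=
  (IsClosedEmbedding.inl.isProperMap.isCompact_preimage hC).union
    (((IsClosedEmbedding.inr.isProperMap.comp hA.isProperMap_subtypeVal).isCompact_preimage
      hC).image hf)

theorem isClosedMap_mk (hA : IsClosed A) (hf : IsProperMap f) :
    IsClosedMap (Quot.mk (AdjRel f)) := by
  intro C hC
  have hsat : IsClosed (inlSaturation f C) := isClosed_inlSaturation f hf.isClosedMap hC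
  rw [← isQuotientMap_quot_mk.isClosed_preimage, isClosed_sum_iff, preimage_inl_saturation,
    preimage_inr_saturation]
  exact ⟨hsat, (hC.preimage continuous_inr).union
    (hA.isClosedEmbedding_subtypeVal.isClosedMap _ (hsat.preimage hf.continuous))⟩

theorem isCompact_preimage_mk_image (hA : IsClosed A) (hf : IsProperMap f) {C : Set (X ⊕ Y)}
    (hC : IsCompact C) : IsCompact (Quot.mk (AdjRel f) ⁻¹' (Quot.mk _ '' C)) := by
  have hsat : IsCompact (inlSaturation f C) := isCompact_inlSaturation f hA hf.continuous hC
  rw [← image_preimage_inl_union_image_preimage_inr (Quot.mk _ ⁻¹' _), preimage_inl_saturation,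
    preimage_inr_saturation]
  exact (hsat.image continuous_inl).union
    (((IsClosedEmbedding.inr.isProperMap.isCompact_preimage hC).union
      ((hf.isCompact_preimage hsat).image continuous_subtype_val)).image continuous_inr)

theorem isProperMap_mk (hA : IsClosed A) (hf : IsProperMap f) :
    IsProperMap (Quot.mk (AdjRel f)) := by
  refine isProperMap_iff_isClosedMap_and_compact_fibers.2
    ⟨continuous_quot_mk, isClosedMap_mk f hA hf, Quot.ind fun c => ?_⟩
  rw [← image_singleton]
  exact isCompact_preimage_mk_image f hA hf isCompact_singleton

end AdjSpace

section AdjunctionMaps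

open AdjSpace

variable {X Y : Type*} {A : Set Y} (f : A → X)

theorem adjInc_injective : Function.Injective (adjInc f) := by
  intro x x' h
  simpa using (mk_inl_eq_mk_iff f).1 h.symm

variable [TopologicalSpace X] [TopologicalSpace Y]

theorem isClosedEmbedding_adjInc (hA : IsClosed A) (hf : IsProperMap f) :
    IsClosedEmbedding (adjInc f) :=
  have hp : IsProperMap (adjInc f) :=
    (isProperMap_mk f hA hf).comp IsClosedEmbedding.inl.isProperMap
  .of_continuous_injective_isClosedMap hp.continuous (adjInc_injective f) hp.isClosedMap

theorem isProperMap_adjP (hA : IsClosed A) (hf : IsProperMap f) : IsProperMap (adjP f) :=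
  (isProperMap_mk f hA hf).comp IsClosedEmbedding.inr.isProperMap

end AdjunctionMaps

section Graphs

variable {V E V' E' : Type*} [TopologicalSpace V] [TopologicalSpace E]
  [TopologicalSpace V'] [TopologicalSpace E']

theorem IsTopGraph.of_homeomorph {g : GraphData V E} {g' : GraphData V' E'} (hg : IsTopGraph g)
    (h0 : V ≃ₜ V') (h1 : E ≃ₜ E') (hs : ∀ e, g'.s (h1 e) = h0 (g.s e))
    (hr : ∀ e, g'.r (h1 e) = h0 (g.r e)) : IsTopGraph g' := by
  have hs' : g'.s = h0 ∘ g.s ∘ h1.symm := funext fun e => by simpa using hs (h1.symm e)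
  have hr' : g'.r = h0 ∘ g.r ∘ h1.symm := funext fun e => by simpa using hr (h1.symm e)
  refine ⟨?_, ?_, ?_⟩
  · rw [hs']; exact h0.continuous.comp (hg.s_cont.comp h1.symm.continuous)
  · rw [hr']; exact h0.continuous.comp (hg.r_cont.comp h1.symm.continuous)
  · rw [hr']; exact (h0.isLocalHomeomorph.comp hg.r_locHomeo).comp h1.symm.isLocalHomeomorph

theorem IsTopGraph.isClosedSubgraph_range {g : GraphData V E} {g' : GraphData V' E'}
    (hg : IsTopGraph g) {i0 : V → V'} {i1 : E → E'} (h0 : IsClosedEmbedding i0)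
    (h1 : IsClosedEmbedding i1) (hs : ∀ e, g'.s (i1 e) = i0 (g.s e))
    (hr : ∀ e, g'.r (i1 e) = i0 (g.r e)) : IsClosedSubgraph g' (range i0) (range i1) where
  s_maps := mapsTo_range_iff.2 fun e => ⟨g.s e, (hs e).symm⟩
  r_maps := mapsTo_range_iff.2 fun e => ⟨g.r e, (hr e).symm⟩
  closed0 := h0.isClosed_range
  closed1 := h1.isClosed_range
  isGraph := hg.of_homeomorph h0.toHomeomorph h1.toHomeomorph
    (fun e => Subtype.ext (hs e)) (fun e => Subtype.ext (hr e))

end Graphs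

theorem adjGraph_closedSubgraph_and_p_proper_general
    {VE EE VF EF : Type*} [TopologicalSpace VE] [TopologicalSpace EE]
    [TopologicalSpace VF] [TopologicalSpace EF]
    [LocallyCompactSpace VE] [T2Space VE] [LocallyCompactSpace EE] [T2Space EE]
    (gE : GraphData VE EE) (gF : GraphData VF EF)
    (hE : IsTopGraph gE)
    {G0 : Set VF} {G1 : Set EF} (hG : IsClosedSubgraph gF G0 G1)
    (m0 : G0 → VE) (m1 : G1 → EE) (hm0 : ProperCont m0) (hm1 : ProperCont m1)
    (hF1s : ∀ e : G1, gE.s (m1 e) = m0 ⟨gF.s e, hG.s_maps e.2⟩)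
    (hF1r : ∀ e : G1, gE.r (m1 e) = m0 ⟨gF.r e, hG.r_maps e.2⟩) :
    IsClosedEmbedding (adjInc m0) ∧ IsClosedEmbedding (adjInc m1) ∧
    IsClosedSubgraph (adjGraph gE gF m0 m1 hG.s_maps hG.r_maps hF1s hF1r)
      (Set.range (adjInc m0)) (Set.range (adjInc m1)) ∧
    (∀ e : EE,
      (adjGraph gE gF m0 m1 hG.s_maps hG.r_maps hF1s hF1r).s (adjInc m1 e)
          = adjInc m0 (gE.s e) ∧
      (adjGraph gE gF m0 m1 hG.s_maps hG.r_maps hF1s hF1r).r (adjInc m1 e)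
          = adjInc m0 (gE.r e)) ∧
    ProperCont (adjP m0) ∧ ProperCont (adjP m1) ∧
    (∀ e : EF,
      (adjGraph gE gF m0 m1 hG.s_maps hG.r_maps hF1s hF1r).s (adjP m1 e)
          = adjP m0 (gF.s e) ∧
      (adjGraph gE gF m0 m1 hG.s_maps hG.r_maps hF1s hF1r).r (adjP m1 e)
          = adjP m0 (gF.r e)) := by
  have hp0 : IsProperMap m0 := hm0.isProperMap
  have hp1 : IsProperMap m1 := hm1.isProperMap
  have emb0 := isClosedEmbedding_adjInc m0 hG.closed0 hp0
  have emb1 := isClosedEmbedding_adjInc m1 hG.closed1 hp1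
  exact ⟨emb0, emb1, hE.isClosedSubgraph_range emb0 emb1 (fun _ => rfl) (fun _ => rfl),
    fun _ => ⟨rfl, rfl⟩, (isProperMap_adjP m0 hG.closed0 hp0).properCont,
    (isProperMap_adjP m1 hG.closed1 hp1).properCont, fun _ => ⟨rfl, rfl⟩⟩

/-- Let `E ∪_m F` be an adjunction topological graph. Then `E` is a closed subgraph of
`E ∪_m F` (via the canonical closed embeddings of `E⁰` and `E¹`), and the canonical maps
`p⁰ : F⁰ → (E ∪_m F)⁰`, `p¹ : F¹ → (E ∪_m F)¹` are proper and satisfy (F1). -/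
theorem adjGraph_closedSubgraph_and_p_proper
    {VE EE VF EF : Type*} [TopologicalSpace VE] [TopologicalSpace EE]
    [TopologicalSpace VF] [TopologicalSpace EF]
    [LocallyCompactSpace VE] [T2Space VE] [LocallyCompactSpace EE] [T2Space EE]
    [LocallyCompactSpace VF] [T2Space VF] [LocallyCompactSpace EF] [T2Space EF]
    (gE : GraphData VE EE) (gF : GraphData VF EF)
    (hE : IsTopGraph gE) (hF : IsTopGraph gF)
    {G0 : Set VF} {G1 : Set EF} (hG : IsClosedSubgraph gF G0 G1)
    (hpre : gF.r ⁻¹' G0 ⊆ G1)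
    (m0 : G0 → VE) (m1 : G1 → EE) (hm0 : ProperCont m0) (hm1 : ProperCont m1)
    (hF1s : ∀ e : G1, gE.s (m1 e) = m0 ⟨gF.s e, hG.s_maps e.2⟩)
    (hF1r : ∀ e : G1, gE.r (m1 e) = m0 ⟨gF.r e, hG.r_maps e.2⟩) :
    IsClosedEmbedding (adjInc m0) ∧ IsClosedEmbedding (adjInc m1) ∧
    IsClosedSubgraph (adjGraph gE gF m0 m1 hG.s_maps hG.r_maps hF1s hF1r)
      (Set.range (adjInc m0)) (Set.range (adjInc m1)) ∧
    (∀ e : EE,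
      (adjGraph gE gF m0 m1 hG.s_maps hG.r_maps hF1s hF1r).s (adjInc m1 e)
          = adjInc m0 (gE.s e) ∧
      (adjGraph gE gF m0 m1 hG.s_maps hG.r_maps hF1s hF1r).r (adjInc m1 e)
          = adjInc m0 (gE.r e)) ∧
    ProperCont (adjP m0) ∧ ProperCont (adjP m1) ∧
    (∀ e : EF,
      (adjGraph gE gF m0 m1 hG.s_maps hG.r_maps hF1s hF1r).s (adjP m1 e)
          = adjP m0 (gF.s e) ∧
      (adjGraph gE gF m0 m1 hG.s_maps hG.r_maps hF1s hF1r).r (adjP m1 e)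
          = adjP m0 (gF.r e)) :=
  adjGraph_closedSubgraph_and_p_proper_general gE gF hE hG m0 m1 hm0 hm1 hF1s hF1r
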